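/- arXiv:1708.01109 — 2 statements merged into one kernel-verified Lean document; each statement's English description precedes it below -/
import Mathlib

section
/- Let M and N be von Neumann algebras on complex Hilbert spaces H and K respectively, let Ω ∈ H and Λ ∈ K be unit vectors cyclic for M and N respectively (i.e. MΩ is dense in H and NΛ is dense in K), and define the states μ(a) = ⟨Ω, aΩ⟩ on M and ν(b) = ⟨Λ, bΛ⟩ on N. Assume ν is faithful. If η : M → N is a positive linear map such that ν(η(a)*η(a)) ≤ μ(a*a) for all a ∈ M, then η is normal, i.e. σ-weakly continuous. -/
open scoped ComplexOrder

noncomputable section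

variable {H K : Type} [NormedAddCommGroup H] [InnerProductSpace ℂ H] [CompleteSpace H]
  [NormedAddCommGroup K] [InnerProductSpace ℂ K] [CompleteSpace K]

noncomputable instance (A : VonNeumannAlgebra H) : Algebra ℂ ↥A :=
  inferInstanceAs (Algebra ℂ ↥A.toStarSubalgebra)

/-- `x ≤ y` in the operator (Loewner) order on `B(H)`. -/
def OpLE (x y : H →L[ℂ] H) : Prop := ∀ ξ : H, 0 ≤ (inner ℂ ξ ((y - x) ξ) : ℂ)

/-- `s` is the least upper bound of the set `S ⊆ B(H)` for the operator order. -/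
def IsOpLUB (S : Set (H →L[ℂ] H)) (s : H →L[ℂ] H) : Prop :=
  (∀ x ∈ S, OpLE x s) ∧ ∀ t : H →L[ℂ] H, (∀ x ∈ S, OpLE x t) → OpLE s t

/-- A positive map between von Neumann algebras is normal (σ-weakly continuous) if and only
if it preserves suprema of increasing nets of self-adjoint elements that are bounded above
(i.e. possess a least upper bound in the operator order); we use this as the definition. -/
def IsNormalMap {M : VonNeumannAlgebra H} {N : VonNeumannAlgebra K} (η : ↥M → ↥N) : Prop :=
  ∀ (ι : Type) (le : ι → ι → Prop), Nonempty ι →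
    (∀ i j : ι, ∃ k, le i k ∧ le j k) →
    ∀ (a : ι → ↥M) (s : ↥M),
      (∀ i, IsSelfAdjoint ((a i : H →L[ℂ] H))) →
      (∀ i j, le i j → OpLE (a i : H →L[ℂ] H) (a j : H →L[ℂ] H)) →
      IsOpLUB (Set.range fun i => ((a i : H →L[ℂ] H))) (s : H →L[ℂ] H) →
      IsOpLUB (Set.range fun i => ((η (a i) : K →L[ℂ] K))) (η s : K →L[ℂ] K)

/-!
Increasing nets of operators bounded above converge weakly, and even strongly, to their least
upper bound (Vigier). Let `T` be the supremum of the `η aᵢ`. As a weak limit of elements of `N`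
it commutes with `N′`, so `T ∈ N`, and `c = η s - T ≥ 0`. Since `c ≤ η (s - aᵢ)`, the Schwarz
inequality gives `⟪c Λ, Λ⟫ ≤ ‖η (s - aᵢ) Λ‖ ‖Λ‖ ≤ ‖(s - aᵢ) Ω‖ ‖Λ‖`, which tends to `0` since
`aᵢ → s` strongly. From `⟪c Λ, Λ⟫ = 0` and `c ≥ 0` we get `c Λ = 0`, hence `ν (c⋆ c) = 0`, and
faithfulness of `ν` gives `c = 0`, i.e. `η s = T`.
-/

open scoped InnerProductSpace
open Filter Topology Set

theorem Complex.exists_tendsto_atTop_of_monotone {α : Type*} [Preorder α] [IsDirectedOrder α]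
    [Nonempty α] {f : α → ℂ} (hf : Monotone f) (hbdd : BddAbove (range f)) :
    ∃ c, Tendsto f atTop (𝓝 c) := by
  obtain ⟨a₀⟩ := ‹Nonempty α›
  have hre : Monotone fun a => (f a).re := fun a b h => (Complex.le_def.1 (hf h)).1
  have hre_bdd : BddAbove (range fun a => (f a).re) := by
    obtain ⟨c, hc⟩ := hbdd
    exact ⟨c.re, forall_mem_range.2 fun a => (Complex.le_def.1 (hc (mem_range_self a))).1⟩
  -- in the complex order, `a ≤ b` forces equal imaginary parts
  have him : ∀ᶠ a in atTop, (f a).im = (f a₀).im :=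
    (eventually_ge_atTop a₀).mono fun a h => (Complex.le_def.1 (hf h)).2.symm
  refine ⟨(⨆ a, (f a).re : ℝ) + (f a₀).im * Complex.I, ?_⟩
  refine (((Complex.continuous_ofReal.tendsto _).comp
    (tendsto_atTop_ciSup hre hre_bdd)).add_const _).congr' (him.mono fun a h => ?_)
  simp [Complex.ext_iff, h]

section Loewner

variable {E : Type*} [NormedAddCommGroup E] [InnerProductSpace ℂ E]

namespace ContinuousLinearMap

theorem isPositive_iff_forall_inner_nonneg {T : E →L[ℂ] E} :
    T.IsPositive ↔ ∀ ξ, 0 ≤ ⟪T ξ, ξ⟫_ℂ := by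
  rw [isPositive_iff_complex]
  refine forall_congr' fun ξ => ?_
  rw [Complex.nonneg_iff, Complex.ext_iff]
  simp only [RCLike.re_to_complex, Complex.ofReal_re, Complex.ofReal_im, true_and]
  grind

theorem inner_apply_self_mono {x y : E →L[ℂ] E} (h : x ≤ y) (ξ : E) :
    ⟪x ξ, ξ⟫_ℂ ≤ ⟪y ξ, ξ⟫_ℂ := by
  simpa [inner_sub_left] using ((le_def x y).1 h).inner_nonneg_left ξ

theorem exists_tendsto_inner_of_forall_inner_self {α : Type*} {l : Filter α}
    {f : α → E →L[ℂ] E} (h : ∀ ξ, ∃ c, Tendsto (fun i => ⟪f i ξ, ξ⟫_ℂ) l (𝓝 c)) (ξ ζ : E) :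
    ∃ c, Tendsto (fun i => ⟪f i ξ, ζ⟫_ℂ) l (𝓝 c) := by
  choose c hc using h
  refine ⟨_, ((((hc (ξ + ζ)).sub (hc (ξ - ζ))).sub
    ((hc (ξ + Complex.I • ζ)).const_mul Complex.I)).add
    ((hc (ξ - Complex.I • ζ)).const_mul Complex.I)).div_const 4 |>.congr fun i => ?_⟩
  exact (inner_map_polarization' (f i : E →ₗ[ℂ] E) ξ ζ).symm

theorem exists_tendsto_inner_of_eventually_norm_le [CompleteSpace E] {α : Type*} {l : Filter α}
    [l.NeBot] {f : α → E →L[ℂ] E} {C : ℝ} (hC : ∀ᶠ i in l, ‖f i‖ ≤ C)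
    (h : ∀ ξ ζ, ∃ c, Tendsto (fun i => ⟪f i ξ, ζ⟫_ℂ) l (𝓝 c)) :
    ∃ T : E →L[ℂ] E, ∀ ξ ζ, Tendsto (fun i => ⟪f i ξ, ζ⟫_ℂ) l (𝓝 ⟪T ξ, ζ⟫_ℂ) := by
  choose L hL using h
  have hL_eq {ξ ζ : E} {c : ℂ} (h : Tendsto (fun i => ⟪f i ξ, ζ⟫_ℂ) l (𝓝 c)) : L ξ ζ = c :=
    tendsto_nhds_unique (hL ξ ζ) h
  let B : E →ₗ⋆[ℂ] E →ₗ[ℂ] ℂ := LinearMap.mk₂'ₛₗ _ _ L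
    (fun ξ₁ ξ₂ ζ => hL_eq <| by simpa [inner_add_left] using (hL ξ₁ ζ).add (hL ξ₂ ζ))
    (fun c ξ ζ => hL_eq <| by
      simpa [inner_smul_left, mul_comm] using (hL ξ ζ).const_mul ((starRingEnd ℂ) c))
    (fun ξ ζ₁ ζ₂ => hL_eq <| by simpa [inner_add_right] using (hL ξ ζ₁).add (hL ξ ζ₂))
    (fun c ξ ζ => hL_eq <| by simpa [inner_smul_right, mul_comm] using (hL ξ ζ).const_mul c)
  have hB : ∀ ξ ζ, ‖B ξ ζ‖ ≤ C * ‖ξ‖ * ‖ζ‖ := fun ξ ζ =>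
    le_of_tendsto (hL ξ ζ).norm <| hC.mono fun i hi => by
      calc ‖⟪f i ξ, ζ⟫_ℂ‖ ≤ ‖f i ξ‖ * ‖ζ‖ := norm_inner_le_norm _ _
        _ ≤ C * ‖ξ‖ * ‖ζ‖ := by gcongr; exact (f i).le_of_opNorm_le hi ξ
  refine ⟨InnerProductSpace.continuousLinearMapOfBilin (B.mkContinuous₂ C hB), fun ξ ζ => ?_⟩
  simpa [B] using hL ξ ζ

theorem norm_apply_sq_le_of_nonneg [CompleteSpace E] {T : E →L[ℂ] E} (hT : 0 ≤ T) (ξ : E) :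
    ‖T ξ‖ ^ 2 ≤ ‖T‖ * RCLike.re ⟪T ξ, ξ⟫_ℂ := by
  have hsq : T * T ≤ ‖T‖ • T := by
    set r := CFC.sqrt T
    have hr : r * r = T := CFC.sqrt_mul_sqrt_self T hT
    have h := CStarAlgebra.star_left_conjugate_le_norm_smul (a := r) (b := T)
    rw [(IsSelfAdjoint.of_nonneg (CFC.sqrt_nonneg T)).star_eq, hr] at h
    calc T * T = r * T * r := by rw [← hr]; noncomm_ring
      _ ≤ ‖T‖ • T := h
  have hT' := (nonneg_iff_isPositive T).1 hT
  have h := (Complex.le_def.1 (inner_apply_self_mono hsq ξ)).1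
  rw [mul_apply_eq_comp, hT'.inner_left_eq_inner_right (T ξ) ξ, inner_self_eq_norm_sq_to_K] at h
  simpa [← Complex.ofReal_pow, inner_smul_real_left] using h

theorem inner_star_mul_self_apply [CompleteSpace E] (b : E →L[ℂ] E) (ξ : E) :
    ⟪ξ, (star b * b) ξ⟫_ℂ = ((‖b ξ‖ ^ 2 : ℝ) : ℂ) := by
  rw [star_eq_adjoint, mul_apply_eq_comp, adjoint_inner_right, inner_self_eq_norm_sq_to_K]
  push_cast
  rfl

section Monotone

variable {S : Set (E →L[ℂ] E)}

theorem isLUB_of_tendsto_inner [Nonempty S] [IsDirectedOrder S] {T : E →L[ℂ] E}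
    (hT : ∀ ξ, Tendsto (fun x : S => ⟪(x : E →L[ℂ] E) ξ, ξ⟫_ℂ) atTop (𝓝 ⟪T ξ, ξ⟫_ℂ)) :
    IsLUB S T := by
  refine ⟨fun x hx => ?_, fun t ht => ?_⟩ <;>
    simp only [le_def, isPositive_iff_forall_inner_nonneg, sub_apply, inner_sub_left]
  · refine fun ξ => ge_of_tendsto ((hT ξ).sub_const ⟪x ξ, ξ⟫_ℂ) ?_
    filter_upwards [eventually_ge_atTop ⟨x, hx⟩] with y hy
    simpa [inner_sub_left] using
      sub_nonneg.2 (inner_apply_self_mono (Subtype.coe_le_coe.2 hy) ξ)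
  · refine fun ξ => ge_of_tendsto' ((hT ξ).const_sub ⟪t ξ, ξ⟫_ℂ) fun y => ?_
    simpa [inner_sub_left] using sub_nonneg.2 (inner_apply_self_mono (ht y.2) ξ)

theorem exists_isLUB_tendsto_inner [CompleteSpace E] (hne : S.Nonempty)
    (hdir : DirectedOn (· ≤ ·) S) (hbdd : BddAbove S) :
    ∃ T, IsLUB S T ∧
      ∀ ξ ζ, Tendsto (fun x : S => ⟪(x : E →L[ℂ] E) ξ, ζ⟫_ℂ) atTop (𝓝 ⟪T ξ, ζ⟫_ℂ) := by
  have := hne.to_subtype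
  have := hdir.isDirectedOrder
  obtain ⟨u, hu⟩ := hbdd
  obtain ⟨x₀, hx₀⟩ := hne
  have hdiag (ξ : E) : ∃ c, Tendsto (fun x : S => ⟪(x : E →L[ℂ] E) ξ, ξ⟫_ℂ) atTop (𝓝 c) :=
    Complex.exists_tendsto_atTop_of_monotone (fun x y h => inner_apply_self_mono h ξ)
      ⟨⟪u ξ, ξ⟫_ℂ, forall_mem_range.2 fun x => inner_apply_self_mono (hu x.2) ξ⟩
  have hnorm : ∀ᶠ x : S in atTop, ‖(x : E →L[ℂ] E)‖ ≤ ‖x₀‖ + ‖u - x₀‖ := by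
    filter_upwards [eventually_ge_atTop ⟨x₀, hx₀⟩] with x hx
    have : ‖(x : E →L[ℂ] E) - x₀‖ ≤ ‖u - x₀‖ :=
      CStarAlgebra.norm_le_norm_of_nonneg_of_le (sub_nonneg.2 hx) (sub_le_sub_right (hu x.2) _)
    calc ‖(x : E →L[ℂ] E)‖ = ‖x₀ + (x - x₀)‖ := by rw [add_sub_cancel]
      _ ≤ ‖x₀‖ + ‖u - x₀‖ := (norm_add_le _ _).trans (by gcongr)
  obtain ⟨T, hT⟩ := exists_tendsto_inner_of_eventually_norm_le hnorm
    (exists_tendsto_inner_of_forall_inner_self hdiag)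
  exact ⟨T, isLUB_of_tendsto_inner fun ξ => hT ξ ξ, hT⟩

theorem tendsto_inner_of_isLUB [CompleteSpace E] (hne : S.Nonempty)
    (hdir : DirectedOn (· ≤ ·) S) {T : E →L[ℂ] E} (hT : IsLUB S T) (ξ ζ : E) :
    Tendsto (fun x : S => ⟪(x : E →L[ℂ] E) ξ, ζ⟫_ℂ) atTop (𝓝 ⟪T ξ, ζ⟫_ℂ) := by
  obtain ⟨T', hT', hlim⟩ := exists_isLUB_tendsto_inner hne hdir ⟨T, hT.1⟩
  exact hT'.unique hT ▸ hlim ξ ζ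

theorem tendsto_apply_of_isLUB [CompleteSpace E] (hne : S.Nonempty)
    (hdir : DirectedOn (· ≤ ·) S) {T : E →L[ℂ] E} (hT : IsLUB S T) (ξ : E) :
    Tendsto (fun x : S => (x : E →L[ℂ] E) ξ) atTop (𝓝 (T ξ)) := by
  have := hdir.isDirectedOrder
  obtain ⟨x₀, hx₀⟩ := hne
  set C := ‖T - x₀‖
  have hform : Tendsto (fun x : S => RCLike.re ⟪(T - x) ξ, ξ⟫_ℂ) atTop (𝓝 0) := by
    simpa [inner_sub_left, Function.comp_def] using
      (RCLike.continuous_re.tendsto _).comp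
        ((tendsto_inner_of_isLUB ⟨x₀, hx₀⟩ hdir hT ξ ξ).const_sub ⟪T ξ, ξ⟫_ℂ)
  have hbound : ∀ᶠ x : S in atTop, ‖(T - x) ξ‖ ^ 2 ≤ C * RCLike.re ⟪(T - x) ξ, ξ⟫_ℂ := by
    filter_upwards [eventually_ge_atTop ⟨x₀, hx₀⟩] with x hx
    have hnonneg : 0 ≤ T - x := sub_nonneg.2 (hT.1 x.2)
    calc ‖(T - x) ξ‖ ^ 2 ≤ ‖T - x‖ * RCLike.re ⟪(T - x) ξ, ξ⟫_ℂ :=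
          norm_apply_sq_le_of_nonneg hnonneg ξ
      _ ≤ C * RCLike.re ⟪(T - x) ξ, ξ⟫_ℂ := by
        gcongr
        · exact (Complex.le_def.1 (((nonneg_iff_isPositive _).1 hnonneg).inner_nonneg_left ξ)).1
        · exact CStarAlgebra.norm_le_norm_of_nonneg_of_le hnonneg
            (sub_le_sub_left (show x₀ ≤ (x : E →L[ℂ] E) from hx) T)
  have hsq : Tendsto (fun x : S => ‖(T - x) ξ‖ ^ 2) atTop (𝓝 0) :=
    squeeze_zero' (.of_forall fun _ => by positivity) hbound (by simpa using hform.const_mul C)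
  rw [tendsto_iff_norm_sub_tendsto_zero]
  simpa [norm_sub_rev] using hsq.sqrt

end Monotone

end ContinuousLinearMap

end Loewner

section OpLE

variable {E : Type} [NormedAddCommGroup E] [InnerProductSpace ℂ E]

theorem opLE_iff_le {x y : E →L[ℂ] E} : OpLE x y ↔ x ≤ y := by
  rw [OpLE, ContinuousLinearMap.le_def, ContinuousLinearMap.isPositive_iff_forall_inner_nonneg]
  refine forall_congr' fun ξ => ?_
  rw [← inner_conj_symm]
  exact star_nonneg_iff

theorem isOpLUB_iff_isLUB {S : Set (E →L[ℂ] E)} {s : E →L[ℂ] E} : IsOpLUB S s ↔ IsLUB S s := by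
  simp only [IsOpLUB, IsLUB, IsLeast, upperBounds, lowerBounds, opLE_iff_le, mem_ofPred_eq]

end OpLE

open ContinuousLinearMap

theorem VonNeumannAlgebra.mem_of_isLUB (N : VonNeumannAlgebra H) {S : Set (H →L[ℂ] H)}
    (hSN : S ⊆ N) (hne : S.Nonempty) (hdir : DirectedOn (· ≤ ·) S) {T : H →L[ℂ] H}
    (hT : IsLUB S T) : T ∈ N := by
  rw [← SetLike.mem_coe, ← N.centralizer_centralizer, Set.mem_centralizer_iff]
  have := hne.to_subtype
  have := hdir.isDirectedOrder
  intro z hz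
  ext ξ
  refine ext_inner_right ℂ fun ζ => ?_
  have hl := tendsto_inner_of_isLUB hne hdir hT ξ (adjoint z ζ)
  simp only [adjoint_inner_right] at hl
  rw [mul_apply_eq_comp, mul_apply_eq_comp]
  refine tendsto_nhds_unique (hl.congr fun x => ?_) (tendsto_inner_of_isLUB hne hdir hT (z ξ) ζ)
  rw [← mul_apply_eq_comp, ← hz _ (hSN x.2), mul_apply_eq_comp]

theorem eq_zero_of_re_inner_nonpos {N : VonNeumannAlgebra K} {Λ : K}
    (hΛ : ∀ b : ↥N, ⟪Λ, ((star b * b : ↥N) : K →L[ℂ] K) Λ⟫_ℂ = 0 → b = 0) {c : ↥N}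
    (hc : 0 ≤ (c : K →L[ℂ] K)) (h : RCLike.re ⟪(c : K →L[ℂ] K) Λ, Λ⟫_ℂ ≤ 0) : c = 0 := by
  have hcΛ : ‖(c : K →L[ℂ] K) Λ‖ ^ 2 ≤ 0 :=
    (norm_apply_sq_le_of_nonneg hc Λ).trans (mul_nonpos_of_nonneg_of_nonpos (norm_nonneg _) h)
  refine hΛ c ?_
  rw [show ((star c * c : ↥N) : K →L[ℂ] K) = star (c : K →L[ℂ] K) * c from rfl,
    inner_star_mul_self_apply]
  simpa using le_antisymm hcΛ (by positivity)

theorem map_le_map_of_positive {M : VonNeumannAlgebra H} {N : VonNeumannAlgebra K}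
    {η : ↥M → ↥N} (hηlin : IsLinearMap ℂ η)
    (hηpos : ∀ a : ↥M, (∀ ξ : H, 0 ≤ ⟪ξ, (a : H →L[ℂ] H) ξ⟫_ℂ) →
      ∀ ξ : K, 0 ≤ ⟪ξ, (η a : K →L[ℂ] K) ξ⟫_ℂ)
    {x y : ↥M} (h : (x : H →L[ℂ] H) ≤ y) : (η x : K →L[ℂ] K) ≤ η y := by
  rw [← sub_nonneg, ← opLE_iff_le] at h ⊢
  simpa [OpLE, hηlin.map_sub] using hηpos (y - x) (by simpa [OpLE] using h)

section Schwarz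

variable {M : VonNeumannAlgebra H} {N : VonNeumannAlgebra K} {Ω : H} {Λ : K} {η : ↥M → ↥N}
  (hschwarz : ∀ a : ↥M, ⟪Λ, ((star (η a) * η a : ↥N) : K →L[ℂ] K) Λ⟫_ℂ
    ≤ ⟪Ω, ((star a * a : ↥M) : H →L[ℂ] H) Ω⟫_ℂ)
include hschwarz

theorem norm_apply_le_of_schwarz (a : ↥M) : ‖(η a : K →L[ℂ] K) Λ‖ ≤ ‖(a : H →L[ℂ] H) Ω‖ := by
  have h := hschwarz a
  rw [show ((star (η a) * η a : ↥N) : K →L[ℂ] K) = star (η a : K →L[ℂ] K) * η a from rfl,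
    show ((star a * a : ↥M) : H →L[ℂ] H) = star (a : H →L[ℂ] H) * a from rfl,
    inner_star_mul_self_apply, inner_star_mul_self_apply, Complex.real_le_real] at h
  exact (pow_le_pow_iff_left₀ (norm_nonneg _) (norm_nonneg _) two_ne_zero).1 h

theorem re_inner_le_of_le_of_schwarz {c : K →L[ℂ] K} {a : ↥M} (hc : c ≤ (η a : K →L[ℂ] K)) :
    RCLike.re ⟪c Λ, Λ⟫_ℂ ≤ ‖(a : H →L[ℂ] H) Ω‖ * ‖Λ‖ :=
  calc RCLike.re ⟪c Λ, Λ⟫_ℂ ≤ RCLike.re ⟪(η a : K →L[ℂ] K) Λ, Λ⟫_ℂ :=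
        (Complex.le_def.1 (inner_apply_self_mono hc Λ)).1
    _ ≤ ‖⟪(η a : K →L[ℂ] K) Λ, Λ⟫_ℂ‖ := RCLike.re_le_norm _
    _ ≤ ‖(η a : K →L[ℂ] K) Λ‖ * ‖Λ‖ := norm_inner_le_norm _ _
    _ ≤ ‖(a : H →L[ℂ] H) Ω‖ * ‖Λ‖ := by gcongr; exact norm_apply_le_of_schwarz hschwarz a

theorem re_inner_nonpos_of_schwarz {ι : Type*} [Nonempty ι] {a : ι → ↥M} {s : ↥M}
    (hdir : DirectedOn (· ≤ ·) (range fun i => (a i : H →L[ℂ] H)))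
    (hs : IsLUB (range fun i => (a i : H →L[ℂ] H)) s) {c : K →L[ℂ] K}
    (hc : ∀ i, c ≤ (η (s - a i) : K →L[ℂ] K)) : RCLike.re ⟪c Λ, Λ⟫_ℂ ≤ 0 := by
  have := hdir.isDirectedOrder
  have := (range_nonempty fun i => (a i : H →L[ℂ] H)).to_subtype
  have hlim := (tendsto_iff_norm_sub_tendsto_zero.1
    (tendsto_apply_of_isLUB (range_nonempty _) hdir hs Ω)).mul_const ‖Λ‖
  rw [zero_mul] at hlim
  refine ge_of_tendsto' hlim ?_
  rintro ⟨_, i, rfl⟩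
  simpa [norm_sub_rev] using re_inner_le_of_le_of_schwarz hschwarz (hc i)

end Schwarz

theorem normal_of_positive_schwarz_general
    (M : VonNeumannAlgebra H) (N : VonNeumannAlgebra K) (Ω : H) (Λ : K)
    (hνfaithful : ∀ b : ↥N, (inner ℂ Λ (((star b * b : ↥N) : K →L[ℂ] K) Λ) : ℂ) = 0 → b = 0)
    (η : ↥M → ↥N) (hηlin : IsLinearMap ℂ η)
    (hηpos : ∀ a : ↥M, (∀ ξ : H, 0 ≤ (inner ℂ ξ ((a : H →L[ℂ] H) ξ) : ℂ)) →
      ∀ ξ : K, 0 ≤ (inner ℂ ξ ((η a : K →L[ℂ] K) ξ) : ℂ))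
    (hschwarz : ∀ a : ↥M,
      (inner ℂ Λ (((star (η a) * η a : ↥N) : K →L[ℂ] K) Λ) : ℂ)
        ≤ (inner ℂ Ω (((star a * a : ↥M) : H →L[ℂ] H) Ω) : ℂ)) :
    IsNormalMap η := by
  intro ι le _ hdir a s _ hmono hlub
  have hηmono (x y : ↥M) (h : (x : H →L[ℂ] H) ≤ y) := map_le_map_of_positive hηlin hηpos h
  have hmono' (i j : ι) (h : le i j) : (a i : H →L[ℂ] H) ≤ a j := opLE_iff_le.1 (hmono i j h)
  have hAdir : DirectedOn (· ≤ ·) (range fun i => (a i : H →L[ℂ] H)) :=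
    directedOn_range.2 fun i j => (hdir i j).imp fun k hk => ⟨hmono' i k hk.1, hmono' j k hk.2⟩
  have hBdir : DirectedOn (· ≤ ·) (range fun i => (η (a i) : K →L[ℂ] K)) :=
    directedOn_range.2 fun i j => (hdir i j).imp fun k hk =>
      ⟨hηmono _ _ (hmono' i k hk.1), hηmono _ _ (hmono' j k hk.2)⟩
  rw [isOpLUB_iff_isLUB] at hlub ⊢
  have hs : (η s : K →L[ℂ] K) ∈ upperBounds (range fun i => (η (a i) : K →L[ℂ] K)) :=
    forall_mem_range.2 fun i => hηmono _ _ (hlub.1 (mem_range_self i))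
  obtain ⟨T, hT, -⟩ := exists_isLUB_tendsto_inner (range_nonempty _) hBdir ⟨_, hs⟩
  let t : ↥N := ⟨T, N.mem_of_isLUB (range_subset_iff.2 fun i => (η (a i)).2) (range_nonempty _)
    hBdir hT⟩
  suffices η s - t = 0 by rwa [sub_eq_zero.1 this]
  refine eq_zero_of_re_inner_nonpos hνfaithful (sub_nonneg.2 (hT.2 hs)) ?_
  refine re_inner_nonpos_of_schwarz hschwarz hAdir hlub fun i => ?_
  rw [hηlin.map_sub]
  push_cast
  exact sub_le_sub_left (hT.1 (mem_range_self i)) _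

/-- If `M`, `N` are von Neumann algebras with cyclic unit vectors `Ω`, `Λ`
defining states `μ(a) = ⟨Ω, aΩ⟩` and `ν(b) = ⟨Λ, bΛ⟩`, with `ν` faithful, and
`η : M → N` is a positive linear map satisfying `ν(η(a)*η(a)) ≤ μ(a*a)` for all `a ∈ M`,
then `η` is normal. -/
theorem normal_of_positive_schwarz
    (M : VonNeumannAlgebra H) (N : VonNeumannAlgebra K) (Ω : H) (Λ : K)
    (hΩunit : ‖Ω‖ = 1) (hΛunit : ‖Λ‖ = 1)
    (hΩcyc : Dense (Set.range fun a : ↥M => (a : H →L[ℂ] H) Ω))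
    (hΛcyc : Dense (Set.range fun b : ↥N => (b : K →L[ℂ] K) Λ))
    (hνfaithful : ∀ b : ↥N, (inner ℂ Λ (((star b * b : ↥N) : K →L[ℂ] K) Λ) : ℂ) = 0 → b = 0)
    (η : ↥M → ↥N) (hηlin : IsLinearMap ℂ η)
    (hηpos : ∀ a : ↥M, (∀ ξ : H, 0 ≤ (inner ℂ ξ ((a : H →L[ℂ] H) ξ) : ℂ)) →
      ∀ ξ : K, 0 ≤ (inner ℂ ξ ((η a : K →L[ℂ] K) ξ) : ℂ))
    (hschwarz : ∀ a : ↥M,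
      (inner ℂ Λ (((star (η a) * η a : ↥N) : K →L[ℂ] K) Λ) : ℂ)
        ≤ (inner ℂ Ω (((star a * a : ↥M) : H →L[ℂ] H) Ω) : ℂ)) :
    IsNormalMap η :=
  normal_of_positive_schwarz_general M N Ω Λ hνfaithful η hηlin hηpos hschwarz
end
end

section
/- Let M ⊆ B(H) and N ⊆ B(K) be von Neumann algebras with cyclic and separating unit vectors Ω ∈ H and Λ ∈ K, defining faithful normal states μ(a) = ⟨Ω, aΩ⟩ and ν(b) = ⟨Λ, bΛ⟩. Let J_μ : H → H and J_ν : K → K be conjugate-linear isometric involutions satisfying J_μΩ = Ω, J_νΛ = Λ, J_μ M J_μ = M′ and J_ν N J_ν = N′ (the defining properties of the modular conjugations of Tomita–Takesaki theory), and set j_μ(x) = J_μ x* J_μ and j_ν(y) = J_ν y* J_ν. Let η : M → N be a positive linear map with ν ∘ η = μ, with dual η′ : N′ → M′. Then the positive map j_ν ∘ η ∘ j_μ : M′ → N′ satisfies ⟨Ω, a′ (j_μ ∘ η′ ∘ j_ν)(b) Ω⟩ = ⟨Λ, (j_ν ∘ η ∘ j_μ)(a′) b Λ⟩ for all a′ ∈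 M′ and b ∈ N; that is, the dual of j_ν ∘ η ∘ j_μ (with respect to μ′ and ν′) equals j_μ ∘ η′ ∘ j_ν. -/
open scoped ComplexOrder

noncomputable section

variable {H K : Type} [NormedAddCommGroup H] [InnerProductSpace ℂ H] [CompleteSpace H]
  [NormedAddCommGroup K] [InnerProductSpace ℂ K] [CompleteSpace K]

/-- Given a conjugate-linear continuous map `J : H → H`, the map `j(x) = J x* J` on `B(H)`. -/
def jmap {H : Type} [NormedAddCommGroup H] [InnerProductSpace ℂ H] [CompleteSpace H]
    (J : H →L⋆[ℂ] H) (x : H →L[ℂ] H) : H →L[ℂ] H :=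
  J.comp ((ContinuousLinearMap.adjoint x).comp J)

/-
The dual pairing is transported by the antiunitary involutions: for `J` fixing `Ω`,
`⟨Ω, x (j y) Ω⟩ = ⟨x* Ω, J y* Ω⟩` is symmetric in `x` and `y`. Applied once on each side, with
the commutation of `M` with `M′` and of `N` with `N′`, it turns the pairing defining `η′` into
the one claimed for `j_ν ∘ η ∘ j_μ`.
-/

theorem inner_map_map_of_antilinear_isometry {E F 𝓕 : Type*} [SeminormedAddCommGroup E]
    [InnerProductSpace ℂ E] [SeminormedAddCommGroup F] [InnerProductSpace ℂ F] [FunLike 𝓕 E F]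
    [SemilinearMapClass 𝓕 (starRingEnd ℂ) E F] (J : 𝓕) (hJ : ∀ x, ‖J x‖ = ‖x‖) (x y : E) :
    inner ℂ (J x) (J y) = inner ℂ y x := by
  have hJI (z : E) : Complex.I • J z = -J (Complex.I • z) := by simp [map_smulₛₗ]
  have hrot (u v : E) : ‖u + Complex.I • v‖ = ‖v - Complex.I • u‖ := by
    rw [← one_mul ‖v - _‖, ← Complex.norm_I, ← norm_smul, smul_sub, smul_smul, Complex.I_mul_I,
      neg_one_smul, sub_neg_eq_add, add_comm]
  simp only [inner_eq_sum_norm_sq_div_four, RCLike.I_to_complex, hJI, sub_neg_eq_add,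
    ← sub_eq_add_neg, ← map_add, ← map_sub, hJ, ← hrot x y, hrot y x, add_comm y x,
    norm_sub_rev y]

theorem inner_map_swap_of_antilinear_involution {E 𝓕 : Type*} [SeminormedAddCommGroup E]
    [InnerProductSpace ℂ E] [FunLike 𝓕 E E] [SemilinearMapClass 𝓕 (starRingEnd ℂ) E E]
    (J : 𝓕) (hJJ : Function.Involutive J) (hJ : ∀ x, ‖J x‖ = ‖x‖) (x y : E) :
    inner ℂ x (J y) = inner ℂ y (J x) := by
  rw [← inner_map_map_of_antilinear_isometry J hJ, hJJ]

theorem jmap_apply_of_apply_eq_self {J : H →L⋆[ℂ] H} {Ω : H} (hJΩ : J Ω = Ω) (x : H →L[ℂ] H) :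
    jmap J x Ω = J (ContinuousLinearMap.adjoint x Ω) := by
  simp [jmap, hJΩ]

theorem inner_apply_jmap_apply_comm {J : H →L⋆[ℂ] H} (hJJ : Function.Involutive J)
    (hJ : ∀ x, ‖J x‖ = ‖x‖) {Ω : H} (hJΩ : J Ω = Ω) (x y : H →L[ℂ] H) :
    inner ℂ Ω (x (jmap J y Ω)) = inner ℂ Ω (y (jmap J x Ω)) := by
  simp only [jmap_apply_of_apply_eq_self hJΩ, ← ContinuousLinearMap.adjoint_inner_left]
  exact inner_map_swap_of_antilinear_involution J hJJ hJ _ _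

theorem VonNeumannAlgebra.apply_comm_of_mem_commutant {M : VonNeumannAlgebra H}
    {x y : H →L[ℂ] H} (hx : x ∈ M) (hy : y ∈ M.commutant) (v : H) : x (y v) = y (x v) :=
  congr($(VonNeumannAlgebra.mem_commutant_iff.mp hy x hx) v)

theorem dual_of_kms_conjugate_general
    (M : VonNeumannAlgebra H) (N : VonNeumannAlgebra K)
    (Ω : H) (Λ : K)
    -- modular conjugations: conjugate-linear isometric involutions fixing the cyclic
    -- vectors, with `J_μ M J_μ = M′` and `J_ν N J_ν = N′`
    (Jμ : H →L⋆[ℂ] H) (Jν : K →L⋆[ℂ] K)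
    (hJμinv : ∀ x : H, Jμ (Jμ x) = x) (hJμiso : ∀ x : H, ‖Jμ x‖ = ‖x‖) (hJμΩ : Jμ Ω = Ω)
    (hJνinv : ∀ y : K, Jν (Jν y) = y) (hJνiso : ∀ y : K, ‖Jν y‖ = ‖y‖) (hJνΛ : Jν Λ = Λ)
    (hJνN : (fun y => jmap Jν y) '' (N : Set (K →L[ℂ] K)) = (N.commutant : Set (K →L[ℂ] K)))
    (η : ↥M → ↥N)
    -- the dual `η′ : N′ → M′` of `η`
    (η' : ↥N.commutant → ↥M.commutant)
    (hη' : ∀ (a : ↥M) (b' : ↥N.commutant),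
      (inner ℂ Ω ((a : H →L[ℂ] H) ((η' b' : H →L[ℂ] H) Ω)) : ℂ)
        = inner ℂ Λ ((η a : K →L[ℂ] K) ((b' : K →L[ℂ] K) Λ))) :
    -- `j_ν ∘ η ∘ j_μ` maps `M′` into `N′` ...
    (∀ (a' : ↥M.commutant) (a : ↥M), (a : H →L[ℂ] H) = jmap Jμ (a' : H →L[ℂ] H) →
      jmap Jν (η a : K →L[ℂ] K) ∈ N.commutant) ∧
    -- ... and its dual is `j_μ ∘ η′ ∘ j_ν`
    (∀ (a' : ↥M.commutant) (b : ↥N) (a : ↥M) (b'' : ↥N.commutant),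
      (a : H →L[ℂ] H) = jmap Jμ (a' : H →L[ℂ] H) →
      (b'' : K →L[ℂ] K) = jmap Jν (b : K →L[ℂ] K) →
      (inner ℂ Ω ((a' : H →L[ℂ] H) ((jmap Jμ (η' b'' : H →L[ℂ] H)) Ω)) : ℂ)
        = inner ℂ Λ ((jmap Jν (η a : K →L[ℂ] K)) ((b : K →L[ℂ] K) Λ))) := by
  have hjη (a : ↥M) : jmap Jν (η a : K →L[ℂ] K) ∈ N.commutant :=
    SetLike.mem_coe.mp (hJνN ▸ Set.mem_image_of_mem _ (η a).2)
  refine ⟨fun _ a _ => hjη a, fun a' b a b'' ha hb => ?_⟩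
  calc inner ℂ Ω ((a' : H →L[ℂ] H) (jmap Jμ (η' b'' : H →L[ℂ] H) Ω))
      = inner ℂ Ω ((η' b'' : H →L[ℂ] H) (jmap Jμ (a' : H →L[ℂ] H) Ω)) :=
        inner_apply_jmap_apply_comm hJμinv hJμiso hJμΩ _ _
    _ = inner ℂ Ω ((a : H →L[ℂ] H) ((η' b'' : H →L[ℂ] H) Ω)) := by
        rw [← ha, VonNeumannAlgebra.apply_comm_of_mem_commutant a.2 (η' b'').2]
    _ = inner ℂ Λ ((η a : K →L[ℂ] K) (jmap Jν (b : K →L[ℂ] K) Λ)) := by rw [hη', hb]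
    _ = inner ℂ Λ ((b : K →L[ℂ] K) (jmap Jν (η a : K →L[ℂ] K) Λ)) :=
        inner_apply_jmap_apply_comm hJνinv hJνiso hJνΛ _ _
    _ = inner ℂ Λ (jmap Jν (η a : K →L[ℂ] K) ((b : K →L[ℂ] K) Λ)) := by
        rw [VonNeumannAlgebra.apply_comm_of_mem_commutant b.2 (hjη a)]

/-- With `J_μ`, `J_ν` the modular conjugations for `(M, Ω)` and `(N, Λ)`,
and `η : M → N` positive, state-preserving, with dual `η′ : N′ → M′`, the positive map
`j_ν ∘ η ∘ j_μ : M′ → N′` has dual `j_μ ∘ η′ ∘ j_ν`; that is,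
`⟨Ω, a′ (j_μ ∘ η′ ∘ j_ν)(b) Ω⟩ = ⟨Λ, (j_ν ∘ η ∘ j_μ)(a′) b Λ⟩` for all `a′ ∈ M′`, `b ∈ N`. -/
theorem dual_of_kms_conjugate
    (M : VonNeumannAlgebra H) (N : VonNeumannAlgebra K)
    (Ω : H) (Λ : K) (hΩunit : ‖Ω‖ = 1) (hΛunit : ‖Λ‖ = 1)
    (hΩcyc : Dense (Set.range fun a : ↥M => (a : H →L[ℂ] H) Ω))
    (hΩsep : ∀ a : ↥M, (a : H →L[ℂ] H) Ω = 0 → a = 0)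
    (hΛcyc : Dense (Set.range fun b : ↥N => (b : K →L[ℂ] K) Λ))
    (hΛsep : ∀ b : ↥N, (b : K →L[ℂ] K) Λ = 0 → b = 0)
    -- modular conjugations: conjugate-linear isometric involutions fixing the cyclic
    -- vectors, with `J_μ M J_μ = M′` and `J_ν N J_ν = N′`
    (Jμ : H →L⋆[ℂ] H) (Jν : K →L⋆[ℂ] K)
    (hJμinv : ∀ x : H, Jμ (Jμ x) = x) (hJμiso : ∀ x : H, ‖Jμ x‖ = ‖x‖) (hJμΩ : Jμ Ω = Ω)
    (hJνinv : ∀ y : K, Jν (Jν y) = y) (hJνiso : ∀ y : K, ‖Jν y‖ = ‖y‖) (hJνΛ : Jν Λ = Λ)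
    (hJμM : (fun x => jmap Jμ x) '' (M : Set (H →L[ℂ] H)) = (M.commutant : Set (H →L[ℂ] H)))
    (hJνN : (fun y => jmap Jν y) '' (N : Set (K →L[ℂ] K)) = (N.commutant : Set (K →L[ℂ] K)))
    (η : ↥M → ↥N) (hηlin : IsLinearMap ℂ η)
    (hηpos : ∀ a : ↥M, (∀ ξ : H, 0 ≤ (inner ℂ ξ ((a : H →L[ℂ] H) ξ) : ℂ)) →
      ∀ ξ : K, 0 ≤ (inner ℂ ξ ((η a : K →L[ℂ] K) ξ) : ℂ))
    (hstate : ∀ a : ↥M,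
      (inner ℂ Λ ((η a : K →L[ℂ] K) Λ) : ℂ) = inner ℂ Ω ((a : H →L[ℂ] H) Ω))
    -- the dual `η′ : N′ → M′` of `η`
    (η' : ↥N.commutant → ↥M.commutant)
    (hη' : ∀ (a : ↥M) (b' : ↥N.commutant),
      (inner ℂ Ω ((a : H →L[ℂ] H) ((η' b' : H →L[ℂ] H) Ω)) : ℂ)
        = inner ℂ Λ ((η a : K →L[ℂ] K) ((b' : K →L[ℂ] K) Λ))) :
    -- `j_ν ∘ η ∘ j_μ` maps `M′` into `N′` ...
    (∀ (a' : ↥M.commutant) (a : ↥M), (a : H →L[ℂ] H) = jmap Jμ (a' : H →L[ℂ] H) →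
      jmap Jν (η a : K →L[ℂ] K) ∈ N.commutant) ∧
    -- ... and its dual is `j_μ ∘ η′ ∘ j_ν`
    (∀ (a' : ↥M.commutant) (b : ↥N) (a : ↥M) (b'' : ↥N.commutant),
      (a : H →L[ℂ] H) = jmap Jμ (a' : H →L[ℂ] H) →
      (b'' : K →L[ℂ] K) = jmap Jν (b : K →L[ℂ] K) →
      (inner ℂ Ω ((a' : H →L[ℂ] H) ((jmap Jμ (η' b'' : H →L[ℂ] H)) Ω)) : ℂ)
        = inner ℂ Λ ((jmap Jν (η a : K →L[ℂ] K)) ((b : K →L[ℂ] K) Λ))) :=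
  dual_of_kms_conjugate_general M N Ω Λ Jμ Jν hJμinv hJμiso hJμΩ hJνinv hJνiso hJνΛ hJνN η η' hη'
end
end
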